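/- Let Λ be a finite set, π a probability measure on Λ, and D = (ψ_λ)_{λ∈Λ} measurable functions with Var_P(ψ_λ²) < ∞. For each λ, let B_λ be a regular partition of {1,...,n} with V_λ = card(B_λ) ≥ ln(4/(π(λ)δ)) blocks, and assume L_1 (√(Var_P ψ_λ²)/Pψ_λ²) √(V_λ/n) ≤ 1/2 whenever Pψ_λ² ≠ 0. Then with probability at least 1 − δ, simultaneously for all λ ∈ Λ: |P̄_{B_λ} ψ_λ − Pψ_λ| ≤ L_2 √(P̄_{B_λ} ψ_λ²) √(V_λ/n), where L_2 = √2 L_1. -/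

import Mathlib

/-!
Block means over disjoint blocks are independent, and a regular block has at least `n / (2V)`
points, so by Chebyshev each block mean of `φ` misses `Pφ` by more than `L₁ σ √(V/n)` with
probability at most `1/(12e)`. The median-of-means is that far off only if at least `⌈V/2⌉` blocks
are, which has probability at most `C(V, ⌈V/2⌉) (12e)^{-⌈V/2⌉} ≤ e^{-V}`. This is applied to `ψ_λ`
on both sides and to `ψ_λ²` from below; the condition on `Var(ψ_λ²)` then makes the median of
`ψ_λ²` at least `Pψ_λ²/2 ≥ Var(ψ_λ)/2`, and since `V_λ ≥ ln(4/(π(λ)δ))` gives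
`3e^{-V_λ} ≤ π(λ)δ`, a union bound over `λ` concludes.
-/

open MeasureTheory ProbabilityTheory Finset
open scoped ENNReal

local notation "L₁" => 2 * Real.sqrt (6 * Real.exp 1)

section

variable {Ω : Type*} [MeasurableSpace Ω] {μ : Measure Ω}

theorem ProbabilityTheory.iIndepFun.comp_of_pairwise_disjoint {ι κ β : Type*} {γ : κ → Type*}
    [MeasurableSpace β] [∀ K, MeasurableSpace (γ K)]
    {Y : ι → Ω → β} (hY : ∀ i, Measurable (Y i)) (hind : iIndepFun Y μ)
    {B : κ → Finset ι} (hB : Pairwise fun K K' => Disjoint (B K) (B K'))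
    {g : ∀ K, (B K → β) → γ K} (hg : ∀ K, Measurable (g K)) :
    iIndepFun (fun K ω => g K fun i => Y i ω) μ := by
  classical
  rw [iIndepFun_iff_measure_inter_preimage_eq_mul]
  intro S
  induction S using Finset.induction_on with
  | empty => simp [hind.isProbabilityMeasure]
  | insert K₀ S hK₀ ih =>
    intro t ht
    have hdisj : Disjoint (B K₀) (S.biUnion B) := (Finset.disjoint_biUnion_right _ _ _).2
      fun K hK => hB (ne_of_mem_of_not_mem hK hK₀).symm
    let restrict : (S.biUnion B → β) → ∀ K : S, γ K := fun v K =>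
      g K fun i => v ⟨i, Finset.mem_biUnion.2 ⟨K, K.2, i.2⟩⟩
    have hrestrict : Measurable restrict :=
      measurable_pi_lambda _ fun K =>
        (hg K).comp (measurable_pi_lambda _ fun _ => measurable_pi_apply _)
    have hindep := (hind.indepFun_finset _ _ hdisj hY).comp (hg K₀) hrestrict
    have hS : ⋂ K ∈ S, (fun ω => g K fun i => Y i ω) ⁻¹' t K
        = (fun ω => restrict fun i => Y i ω) ⁻¹' Set.univ.pi fun K : S => t K := by
      ext ω
      simp [restrict]
    rw [Finset.set_biInter_insert, Finset.prod_insert hK₀,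
      ← ih fun K hK => ht K (Finset.mem_insert_of_mem hK), hS]
    exact hindep.measure_inter_preimage_eq_mul _ _ (ht K₀ (Finset.mem_insert_self _ _))
      (.univ_pi fun K => ht K (Finset.mem_insert_of_mem K.2))

noncomputable def blockMean {ι : Type*} (S : Finset ι) (x : ι → ℝ) : ℝ := (#S : ℝ)⁻¹ * ∑ i ∈ S, x i

theorem ProbabilityTheory.iIndepFun.blockMean {ι κ : Type*} {Y : ι → Ω → ℝ}
    (hY : ∀ i, Measurable (Y i)) (hind : iIndepFun Y μ) {B : κ → Finset ι}
    (hB : Pairwise fun K K' => Disjoint (B K) (B K')) :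
    iIndepFun (fun K ω => blockMean (B K) fun i => Y i ω) μ := by
  have := hind.comp_of_pairwise_disjoint hY hB
    (g := fun K v => (#(B K) : ℝ)⁻¹ * ∑ i, v i)
    fun K => (Finset.measurable_sum _ fun i _ => measurable_pi_apply i).const_mul _
  convert this using 3 with K ω
  exact congrArg _ (Finset.sum_coe_sort (B K) fun i => Y i ω).symm

theorem integral_blockMean {ι : Type*} {S : Finset ι} (hS : S.Nonempty) {Y : ι → Ω → ℝ}
    (hY : ∀ i ∈ S, Integrable (Y i) μ) {m : ℝ} (hm : ∀ i ∈ S, ∫ ω, Y i ω ∂μ = m) :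
    ∫ ω, blockMean S (fun i => Y i ω) ∂μ = m := by
  simp_rw [blockMean, integral_const_mul, integral_finsetSum _ hY, Finset.sum_congr rfl hm,
    Finset.sum_const, nsmul_eq_mul]
  exact inv_mul_cancel_left₀ (Nat.cast_ne_zero.2 hS.card_pos.ne') m

theorem variance_blockMean {ι : Type*} {S : Finset ι} {Y : ι → Ω → ℝ}
    (hY : ∀ i ∈ S, MemLp (Y i) 2 μ) (hind : iIndepFun Y μ) {v : ℝ}
    (hv : ∀ i ∈ S, variance (Y i) μ = v) :
    variance (fun ω => blockMean S fun i => Y i ω) μ = (#S : ℝ)⁻¹ * v := by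
  have hsum : (fun ω => blockMean S fun i => Y i ω) = fun ω => (#S : ℝ)⁻¹ * (∑ i ∈ S, Y i) ω := by
    ext ω
    simp [blockMean, Finset.sum_apply]
  rw [hsum, variance_const_mul, IndepFun.variance_sum hY fun i _ j _ hij => hind.indepFun hij,
    Finset.sum_congr rfl hv, Finset.sum_const, nsmul_eq_mul]
  rcases eq_or_ne (#S : ℝ) 0 with h | h
  · simp [h]
  · field_simp

theorem memLp_blockMean {ι : Type*} {p : ℝ≥0∞} {S : Finset ι} {Y : ι → Ω → ℝ}
    (hY : ∀ i ∈ S, MemLp (Y i) p μ) : MemLp (fun ω => blockMean S fun i => Y i ω) p μ :=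
  (memLp_finsetSum S hY).const_mul _

theorem measure_lt_abs_sub_le_of_variance_le [IsFiniteMeasure μ] {X : Ω → ℝ} (hX : MemLp X 2 μ)
    {ε q : ℝ} (hε : 0 ≤ ε) (hvar : variance X μ ≤ q * ε ^ 2) :
    μ {ω | ε < |X ω - μ[X]|} ≤ ENNReal.ofReal q := by
  rcases hε.eq_or_lt with rfl | hε
  · have hzero : evariance X μ = 0 := by
      rw [← hX.ofReal_variance_eq, le_antisymm (by simpa using hvar) (variance_nonneg X μ),
        ENNReal.ofReal_zero]
    have hae := (evariance_eq_zero_iff hX.aestronglyMeasurable.aemeasurable).1 hzero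
    refine (measure_mono_null (fun ω hω => ?_) hae).trans_le zero_le
    exact sub_ne_zero.1 (abs_pos.1 hω)
  · calc μ {ω | ε < |X ω - μ[X]|} ≤ μ {ω | ε ≤ |X ω - μ[X]|} :=
          measure_mono fun ω (hω : ε < _) => hω.le
      _ ≤ ENNReal.ofReal (variance X μ / ε ^ 2) := meas_ge_le_variance_div_sq hX hε
      _ ≤ ENNReal.ofReal q := ENNReal.ofReal_le_ofReal ((div_le_iff₀ (by positivity)).2 hvar)

theorem measure_le_card_filter_mem_le {ι β : Type*} [Fintype ι] [MeasurableSpace β]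
    {Z : ι → Ω → β} (hZ : iIndepFun Z μ) {t : Set β} [DecidablePred (· ∈ t)]
    (ht : MeasurableSet t) {q : ℝ≥0∞}
    (hq : ∀ K, μ (Z K ⁻¹' t) ≤ q) (m : ℕ) :
    μ {ω | m ≤ #{K | Z K ω ∈ t}} ≤ (Fintype.card ι).choose m * q ^ m := by
  classical
  have hsub : {ω | m ≤ #{K | Z K ω ∈ t}}
      ⊆ ⋃ S ∈ Finset.univ.powersetCard m, ⋂ K ∈ S, Z K ⁻¹' t := by
    intro ω hω
    obtain ⟨S, hS, hcard⟩ := Finset.exists_subset_card_eq hω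
    exact Set.mem_iUnion₂.2 ⟨S, Finset.mem_powersetCard.2 ⟨Finset.subset_univ S, hcard⟩,
      Set.mem_iInter₂.2 fun K hK => (Finset.mem_filter.1 (hS hK)).2⟩
  calc μ {ω | m ≤ #{K | Z K ω ∈ t}}
      ≤ ∑ S ∈ Finset.univ.powersetCard m, μ (⋂ K ∈ S, Z K ⁻¹' t) :=
        (measure_mono hsub).trans (measure_biUnion_finset_le _ _)
    _ ≤ ∑ _S ∈ Finset.univ.powersetCard m, q ^ m := by
        refine Finset.sum_le_sum fun S hS => ?_
        rw [hZ.meas_biInter fun K _ => ⟨t, ht, rfl⟩, ← (Finset.mem_powersetCard.1 hS).2]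
        exact Finset.prod_le_pow_card _ _ _ fun K _ => hq K
    _ = (Fintype.card ι).choose m * q ^ m := by
        rw [Finset.sum_const, Finset.card_powersetCard, Finset.card_univ, nsmul_eq_mul]

theorem choose_mul_pow_le_exp_neg (V : ℕ) :
    (V.choose ((V + 1) / 2) : ℝ) * (12 * Real.exp 1)⁻¹ ^ ((V + 1) / 2) ≤ Real.exp (-V) := by
  set m := (V + 1) / 2
  have hchoose : (V.choose m : ℝ) ≤ 2 ^ V := by exact_mod_cast Nat.choose_le_two_pow V m
  have hbase : (2 * Real.exp 1) ^ 2 ≤ 12 * Real.exp 1 := by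
    nlinarith [Real.exp_one_lt_d9, Real.exp_pos 1]
  have hkey : 2 ^ V * Real.exp 1 ^ V ≤ (12 * Real.exp 1) ^ m :=
    calc 2 ^ V * Real.exp 1 ^ V = (2 * Real.exp 1) ^ V := (mul_pow _ _ _).symm
      _ ≤ (2 * Real.exp 1) ^ (2 * m) :=
          pow_le_pow_right₀ (by linarith [Real.add_one_le_exp 1]) (by omega)
      _ = ((2 * Real.exp 1) ^ 2) ^ m := pow_mul _ _ _
      _ ≤ (12 * Real.exp 1) ^ m := pow_le_pow_left₀ (by positivity) hbase _
  rw [Real.exp_neg, ← Real.exp_one_pow, inv_pow, ← div_eq_mul_inv,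
    div_le_iff₀ (by positivity), ← div_eq_inv_mul, le_div_iff₀ (by positivity)]
  nlinarith [pow_pos (Real.exp_pos 1) V]

theorem measure_lt_abs_blockMean_sub_le [IsFiniteMeasure μ] {ι : Type*} {Y : ι → Ω → ℝ}
    (hY : ∀ i, MemLp (Y i) 2 μ) (hind : iIndepFun Y μ) {m v : ℝ} (hm : ∀ i, ∫ ω, Y i ω ∂μ = m)
    (hv : ∀ i, variance (Y i) μ = v) {n V : ℕ} (hV : 0 < V) (hVn : (V : ℝ) ≤ n / 2)
    {S : Finset ι} (hreg : |(#S : ℝ) - n / V| ≤ 1) :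
    μ {ω | L₁ * √v * √(V / n) < |(blockMean S fun i => Y i ω) - m|}
      ≤ ENNReal.ofReal (12 * Real.exp 1)⁻¹ := by
  have hVpos : (0 : ℝ) < V := Nat.cast_pos.2 hV
  have hnpos : (0 : ℝ) < n := by linarith
  have hnV : 2 ≤ (n : ℝ) / V := by rw [le_div_iff₀ hVpos]; linarith
  have hcard_pos : (0 : ℝ) < #S := by linarith [(abs_le.1 hreg).1]
  have hinv : (#S : ℝ)⁻¹ ≤ 2 * (V / n) := by
    rw [inv_le_comm₀ hcard_pos (by positivity), mul_inv, inv_div]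
    linarith [(abs_le.1 hreg).1]
  obtain ⟨i₀, hi₀⟩ : S.Nonempty := Finset.card_pos.1 (by exact_mod_cast hcard_pos)
  have hv0 : 0 ≤ v := hv i₀ ▸ variance_nonneg _ _
  have hmean : μ[fun ω => blockMean S fun i => Y i ω] = m :=
    integral_blockMean ⟨i₀, hi₀⟩ (fun i _ => (hY i).integrable one_le_two) fun i _ => hm i
  have hvar : variance (fun ω => blockMean S fun i => Y i ω) μ
      ≤ (12 * Real.exp 1)⁻¹ * (L₁ * √v * √(V / n)) ^ 2 := by
    simp only [mul_pow, Real.sq_sqrt hv0, Real.sq_sqrt (by positivity : (0 : ℝ) ≤ V / n),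
      Real.sq_sqrt (by positivity : (0 : ℝ) ≤ 6 * Real.exp 1)]
    rw [variance_blockMean (fun i _ => hY i) hind fun i _ => hv i]
    calc (#S : ℝ)⁻¹ * v ≤ 2 * (V / n) * v := mul_le_mul_of_nonneg_right hinv hv0
      _ = (12 * Real.exp 1)⁻¹ * (2 ^ 2 * (6 * Real.exp 1) * v * (V / n)) := by
          field_simp
          ring
  simpa only [hmean] using
    measure_lt_abs_sub_le_of_variance_le (memLp_blockMean fun i _ => hY i) (by positivity) hvar

theorem measure_half_blockMean_mem_le_exp_neg {E : Type*} [MeasurableSpace E]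
    [IsProbabilityMeasure μ] {n : ℕ} {X : Fin n → Ω → E} (hX : ∀ i, Measurable (X i))
    (hindep : iIndepFun X μ) {P : Measure E} (hid : ∀ i, μ.map (X i) = P)
    {φ : E → ℝ} (hφ : Measurable φ) (hφ2 : MemLp φ 2 P)
    {V : ℕ} (hVn : (V : ℝ) ≤ n / 2) {B : Fin V → Finset (Fin n)}
    (hdisj : Pairwise fun K K' => Disjoint (B K) (B K'))
    (hreg : ∀ K, |(#(B K) : ℝ) - n / V| ≤ 1)
    {t : Set ℝ} [DecidablePred (· ∈ t)] (ht : MeasurableSet t)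
    (hfar : ∀ x ∈ t, L₁ * √(variance φ P) * √(V / n) < |x - ∫ y, φ y ∂P|) :
    μ {ω | (V : ℝ) ≤ 2 * #{K | blockMean (B K) (fun i => φ (X i ω)) ∈ t}}
      ≤ ENNReal.ofReal (Real.exp (-V)) := by
  set Y : Fin n → Ω → ℝ := fun i ω => φ (X i ω)
  have hmp : ∀ i, MeasurePreserving (X i) μ P := fun i => ⟨hX i, hid i⟩
  have hY2 : ∀ i, MemLp (Y i) 2 μ := fun i => hφ2.comp_measurePreserving (hmp i)
  have hYmean : ∀ i, ∫ ω, Y i ω ∂μ = ∫ y, φ y ∂P := fun i => by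
    rw [← hid i, integral_map (hX i).aemeasurable (hid i ▸ hφ.aestronglyMeasurable)]
  have hYvar : ∀ i, variance (Y i) μ = variance φ P := fun i =>
    (hmp i).variance_fun_comp hφ.aemeasurable
  have hYindep : iIndepFun Y μ := hindep.comp (fun _ => φ) fun _ => hφ
  set Z : Fin V → Ω → ℝ := fun K ω => blockMean (B K) fun i => Y i ω
  have hblock : ∀ K, μ (Z K ⁻¹' t) ≤ ENNReal.ofReal (12 * Real.exp 1)⁻¹ := fun K =>
    (measure_mono (s := Z K ⁻¹' t) fun ω hω => hfar _ hω).trans <|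
      measure_lt_abs_blockMean_sub_le hY2 hYindep hYmean hYvar K.pos hVn (hreg K)
  calc μ {ω | (V : ℝ) ≤ 2 * #{K | blockMean (B K) (fun i => φ (X i ω)) ∈ t}}
      ≤ μ {ω | (V + 1) / 2 ≤ #{K | Z K ω ∈ t}} := by
        refine measure_mono fun ω (hω : (V : ℝ) ≤ _) => ?_
        have : V ≤ 2 * #{K | Z K ω ∈ t} := by exact_mod_cast hω
        exact (by omega : (V + 1) / 2 ≤ #{K | Z K ω ∈ t})
    _ ≤ (Fintype.card (Fin V)).choose ((V + 1) / 2) *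
          ENNReal.ofReal (12 * Real.exp 1)⁻¹ ^ ((V + 1) / 2) :=
        measure_le_card_filter_mem_le (hYindep.blockMean (fun i => hφ.comp (hX i)) hdisj) ht
          hblock _
    _ = ENNReal.ofReal (V.choose ((V + 1) / 2) * (12 * Real.exp 1)⁻¹ ^ ((V + 1) / 2)) := by
        rw [Fintype.card_fin, ENNReal.ofReal_mul (by positivity),
          ENNReal.ofReal_pow (by positivity), ENNReal.ofReal_natCast]
    _ ≤ ENNReal.ofReal (Real.exp (-V)) := ENNReal.ofReal_le_ofReal (choose_mul_pow_le_exp_neg V)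

theorem exists_of_half_le_card_filter {V : ℕ} {p q : Fin V → Prop} [DecidablePred p]
    [DecidablePred q] (hp : (V : ℝ) ≤ 2 * #{K | p K}) (hq : ¬ (V : ℝ) ≤ 2 * #{K | q K}) :
    ∃ K, p K ∧ ¬ q K := by
  by_contra! h
  exact hq (hp.trans (by gcongr with K; exact h K))

theorem median_le_of_not_half_gt {V : ℕ} {x : Fin V → ℝ} {M a : ℝ}
    (hM : (V : ℝ) ≤ 2 * #{K | M ≤ x K}) (ha : ¬ (V : ℝ) ≤ 2 * #{K | x K ∈ Set.Ioi a}) :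
    M ≤ a := by
  obtain ⟨K, hMK, hKa⟩ := exists_of_half_le_card_filter hM ha
  exact hMK.trans (not_lt.1 hKa)

theorem le_median_of_not_half_lt {V : ℕ} {x : Fin V → ℝ} {M a : ℝ}
    (hM : (V : ℝ) ≤ 2 * #{K | x K ≤ M}) (ha : ¬ (V : ℝ) ≤ 2 * #{K | x K ∈ Set.Iio a}) :
    a ≤ M := by
  obtain ⟨K, hKM, haK⟩ := exists_of_half_le_card_filter hM ha
  exact (not_lt.1 haK).trans hKM

theorem sqrt_le_sqrt_two_mul_sqrt {v m ε M : ℝ} (hv : v ≤ m) (hε : m ≠ 0 → ε ≤ m / 2)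
    (hM : m - ε ≤ M) : √v ≤ √2 * √M := by
  rw [← Real.sqrt_mul zero_le_two]
  rcases eq_or_ne m 0 with rfl | hm
  · simp [Real.sqrt_eq_zero'.2 hv]
  · exact Real.sqrt_le_sqrt (by linarith [hε hm])

theorem measure_lt_abs_median_sub_integral_le {E : Type*} [MeasurableSpace E]
    [IsProbabilityMeasure μ] {n : ℕ} {X : Fin n → Ω → E} (hX : ∀ i, Measurable (X i))
    (hindep : iIndepFun X μ) {P : Measure E} [IsProbabilityMeasure P]
    (hid : ∀ i, μ.map (X i) = P) {ψ : E → ℝ} (hψ : Measurable ψ)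
    (hψsq : MemLp (fun x => ψ x ^ 2) 2 P)
    {V : ℕ} (hVn : (V : ℝ) ≤ n / 2) {B : Fin V → Finset (Fin n)}
    (hdisj : Pairwise fun K K' => Disjoint (B K) (B K'))
    (hreg : ∀ K, |(#(B K) : ℝ) - n / V| ≤ 1)
    (hCD : ∫ x, ψ x ^ 2 ∂P ≠ 0 →
      L₁ * (√(variance (fun x => ψ x ^ 2) P) / ∫ x, ψ x ^ 2 ∂P) * √(V / n) ≤ 1 / 2)
    {M M₂ : Ω → ℝ}
    (hM : ∀ ω, (V : ℝ) ≤ 2 * #{K | blockMean (B K) (fun i => ψ (X i ω)) ≤ M ω} ∧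
      (V : ℝ) ≤ 2 * #{K | M ω ≤ blockMean (B K) (fun i => ψ (X i ω))})
    (hM₂ : ∀ ω, (V : ℝ) ≤ 2 * #{K | blockMean (B K) (fun i => ψ (X i ω) ^ 2) ≤ M₂ ω}) :
    μ {ω | √2 * L₁ * √(M₂ ω) * √(V / n) < |M ω - ∫ x, ψ x ∂P|}
      ≤ ENNReal.ofReal (3 * Real.exp (-V)) := by
  have hψ2 : MemLp ψ 2 P :=
    (memLp_two_iff_integrable_sq hψ.aestronglyMeasurable).2 (hψsq.integrable one_le_two)
  set m := ∫ x, ψ x ∂P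
  set m₂ := ∫ x, ψ x ^ 2 ∂P
  set ε := L₁ * √(variance ψ P) * √(V / n)
  set ε₂ := L₁ * √(variance (fun x => ψ x ^ 2) P) * √(V / n)
  have hup := measure_half_blockMean_mem_le_exp_neg hX hindep hid hψ hψ2 hVn hdisj hreg
    (t := Set.Ioi (m + ε)) measurableSet_Ioi fun x (hx : _ < x) => by linarith [le_abs_self (x - m)]
  have hlow := measure_half_blockMean_mem_le_exp_neg hX hindep hid hψ hψ2 hVn hdisj hreg
    (t := Set.Iio (m - ε)) measurableSet_Iio fun x (hx : x < _) => by linarith [neg_abs_le (x - m)]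
  have hlow₂ := measure_half_blockMean_mem_le_exp_neg hX hindep hid (hψ.pow_const 2) hψsq hVn hdisj
    hreg (t := Set.Iio (m₂ - ε₂)) measurableSet_Iio fun x (hx : x < _) => by
      linarith [neg_abs_le (x - m₂)]
  set U₁ := {ω | (V : ℝ) ≤ 2 * #{K | blockMean (B K) (fun i => ψ (X i ω)) ∈ Set.Ioi (m + ε)}}
  set U₂ := {ω | (V : ℝ) ≤ 2 * #{K | blockMean (B K) (fun i => ψ (X i ω)) ∈ Set.Iio (m - ε)}}
  set U₃ := {ω | (V : ℝ) ≤ 2 * #{K | blockMean (B K) (fun i => ψ (X i ω) ^ 2) ∈ Set.Iio (m₂ - ε₂)}}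
  have hε₂ : m₂ ≠ 0 → ε₂ ≤ m₂ / 2 := fun hm₂ => by
    have hpos : 0 < m₂ := (integral_nonneg fun x => sq_nonneg _).lt_of_ne' hm₂
    have := hCD hm₂
    rw [mul_div_assoc', div_mul_eq_mul_div, div_le_iff₀ hpos] at this
    linarith
  have hsub : {ω | √2 * L₁ * √(M₂ ω) * √(V / n) < |M ω - m|} ⊆ U₁ ∪ U₂ ∪ U₃ := by
    intro ω (hω : _ < |M ω - m|)
    by_contra hgood
    simp only [Set.mem_union, not_or] at hgood
    obtain ⟨⟨h₁, h₂⟩, h₃⟩ := hgood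
    have hdev : |M ω - m| ≤ ε := abs_sub_le_iff.2
      ⟨by linarith [median_le_of_not_half_gt (hM ω).2 h₁],
        by linarith [le_median_of_not_half_lt (hM ω).1 h₂]⟩
    have hσ : √(variance ψ P) ≤ √2 * √(M₂ ω) :=
      sqrt_le_sqrt_two_mul_sqrt (m := m₂) (variance_le_expectation_sq hψ.aestronglyMeasurable)
        hε₂ (by linarith [le_median_of_not_half_lt (hM₂ ω) h₃])
    refine hω.not_ge (hdev.trans ?_)
    calc ε = L₁ * √(variance ψ P) * √(V / n) := rfl
      _ ≤ L₁ * (√2 * √(M₂ ω)) * √(V / n) := by gcongr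
      _ = √2 * L₁ * √(M₂ ω) * √(V / n) := by ring
  calc μ {ω | √2 * L₁ * √(M₂ ω) * √(V / n) < |M ω - m|}
      ≤ μ U₁ + μ U₂ + μ U₃ :=
        (measure_mono hsub).trans
          ((measure_union_le _ _).trans (add_le_add (measure_union_le _ _) le_rfl))
    _ ≤ ENNReal.ofReal (Real.exp (-V)) + ENNReal.ofReal (Real.exp (-V)) +
          ENNReal.ofReal (Real.exp (-V)) := by gcongr
    _ = ENNReal.ofReal (3 * Real.exp (-V)) := by
        rw [← ENNReal.ofReal_add (by positivity) (by positivity),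
          ← ENNReal.ofReal_add (by positivity) (by positivity)]
        ring_nf

theorem three_mul_exp_neg_le_of_log_le {a V : ℝ} (ha : 0 < a) (hV : Real.log (4 / a) ≤ V) :
    3 * Real.exp (-V) ≤ a := by
  have h := (Real.log_le_iff_le_exp (by positivity)).1 hV
  rw [div_le_iff₀ ha] at h
  rw [Real.exp_neg, ← div_eq_mul_inv, div_le_iff₀ (Real.exp_pos V)]
  linarith [Real.exp_pos V]

end

theorem simultaneous_median_of_means_deviation_general
    {Ω E Λ : Type*} [MeasurableSpace Ω] [MeasurableSpace E] [Fintype Λ]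
    (μ : Measure Ω) [IsProbabilityMeasure μ]
    (n : ℕ) (hn : 0 < n)
    (X : Fin n → Ω → E) (hXmeas : ∀ i, Measurable (X i))
    (hindep : iIndepFun X μ)
    (P : Measure E) (hid : ∀ i, Measure.map (X i) μ = P)
    (π : Λ → ℝ) (hπpos : ∀ l, 0 < π l) (hπsum : ∑ l, π l = 1)
    (ψ : Λ → E → ℝ) (hψ : ∀ l, Measurable (ψ l))
    (hψ4 : ∀ l, MemLp (fun x => (ψ l x) ^ 2) 2 P)
    (δ : ℝ) (hδ : δ ∈ Set.Ioo (0 : ℝ) 1)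
    (Vl : Λ → ℕ)
    (hVlow : ∀ l, Real.log (4 / (π l * δ)) ≤ (Vl l : ℝ))
    (hVup : ∀ l, (Vl l : ℝ) ≤ (n : ℝ) / 2)
    (B : (l : Λ) → Fin (Vl l) → Finset (Fin n))
    (hdisj : ∀ l, Pairwise (fun K K' => Disjoint (B l K) (B l K')))
    (hreg : ∀ l K, |((B l K).card : ℝ) - (n : ℝ) / (Vl l)| ≤ 1)
    (hCD : ∀ l, ∫ x, (ψ l x) ^ 2 ∂P ≠ 0 →
      (2 * Real.sqrt (6 * Real.exp 1)) *
          (Real.sqrt (variance (fun x => (ψ l x) ^ 2) P) / ∫ x, (ψ l x) ^ 2 ∂P) *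
          Real.sqrt ((Vl l : ℝ) / n) ≤ 1 / 2)
    (medψ medψ2 : Λ → Ω → ℝ)
    (hmedψ : ∀ l ω,
      (Vl l : ℝ) ≤ 2 * (Finset.univ.filter (fun K =>
          ((B l K).card : ℝ)⁻¹ * ∑ i ∈ B l K, ψ l (X i ω) ≤ medψ l ω)).card ∧
      (Vl l : ℝ) ≤ 2 * (Finset.univ.filter (fun K =>
          medψ l ω ≤ ((B l K).card : ℝ)⁻¹ * ∑ i ∈ B l K, ψ l (X i ω))).card)
    (hmedψ2 : ∀ l ω,
      (Vl l : ℝ) ≤ 2 * (Finset.univ.filter (fun K =>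
          ((B l K).card : ℝ)⁻¹ * ∑ i ∈ B l K, (ψ l (X i ω)) ^ 2 ≤ medψ2 l ω)).card ∧
      (Vl l : ℝ) ≤ 2 * (Finset.univ.filter (fun K =>
          medψ2 l ω ≤ ((B l K).card : ℝ)⁻¹ * ∑ i ∈ B l K, (ψ l (X i ω)) ^ 2)).card) :
    1 - ENNReal.ofReal δ ≤
      μ {ω | ∀ l, |medψ l ω - ∫ x, ψ l x ∂P| ≤
        (Real.sqrt 2 * (2 * Real.sqrt (6 * Real.exp 1))) *
          Real.sqrt (medψ2 l ω) * Real.sqrt ((Vl l : ℝ) / n)} := by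
  have : IsProbabilityMeasure P :=
    hid ⟨0, hn⟩ ▸ Measure.isProbabilityMeasure_map (hXmeas _).aemeasurable
  set G := {ω | ∀ l, |medψ l ω - ∫ x, ψ l x ∂P| ≤
    √2 * L₁ * √(medψ2 l ω) * √(Vl l / n)}
  have hbad : ∀ l, μ {ω | √2 * L₁ * √(medψ2 l ω) * √(Vl l / n) < |medψ l ω - ∫ x, ψ l x ∂P|}
      ≤ ENNReal.ofReal (π l * δ) := fun l =>
    (measure_lt_abs_median_sub_integral_le hXmeas hindep hid (hψ l) (hψ4 l) (hVup l) (hdisj l)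
      (hreg l) (hCD l) (hmedψ l) fun ω => (hmedψ2 l ω).1).trans <|
      ENNReal.ofReal_le_ofReal (three_mul_exp_neg_le_of_log_le (mul_pos (hπpos l) hδ.1) (hVlow l))
  have hGc : μ Gᶜ ≤ ENNReal.ofReal δ :=
    calc μ Gᶜ ≤ ∑ l, μ {ω | √2 * L₁ * √(medψ2 l ω) * √(Vl l / n) < |medψ l ω - ∫ x, ψ l x ∂P|} := by
          refine (measure_mono fun ω hω => ?_).trans (measure_iUnion_fintype_le _ _)
          simpa [G] using hω
      _ ≤ ∑ l, ENNReal.ofReal (π l * δ) := Finset.sum_le_sum fun l _ => hbad l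
      _ = ENNReal.ofReal δ := by
          rw [← ENNReal.ofReal_sum_of_nonneg fun l _ => (mul_pos (hπpos l) hδ.1).le,
            ← Finset.sum_mul, hπsum, one_mul]
  rw [tsub_le_iff_right]
  calc 1 = μ Set.univ := measure_univ.symm
    _ ≤ μ G + μ Gᶜ := measure_univ_le_add_compl G
    _ ≤ μ G + ENNReal.ofReal δ := by gcongr

/-- Simultaneous median-of-means deviation bounds over a finite dictionary
(Corollary 2): with per-function regular partitions into `Vl λ ≥ ln(4/(π λ δ))`
blocks and the fourth-moment condition `C(D)`, with probability at least `1 - δ`,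
for every `λ` the median-of-means estimate of `Pψ_λ` deviates by at most
`L₂ √(P̄ ψ_λ²) √(Vl λ / n)`, where `L₂ = √2 L₁`. -/
theorem simultaneous_median_of_means_deviation
    {Ω E Λ : Type*} [MeasurableSpace Ω] [MeasurableSpace E] [Fintype Λ]
    (μ : Measure Ω) [IsProbabilityMeasure μ]
    (n : ℕ) (hn : 0 < n)
    (X : Fin n → Ω → E) (hXmeas : ∀ i, Measurable (X i))
    (hindep : iIndepFun X μ)
    (P : Measure E) (hid : ∀ i, Measure.map (X i) μ = P)
    (π : Λ → ℝ) (hπpos : ∀ l, 0 < π l) (hπsum : ∑ l, π l = 1)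
    (ψ : Λ → E → ℝ) (hψ : ∀ l, Measurable (ψ l))
    (hψ4 : ∀ l, MemLp (fun x => (ψ l x) ^ 2) 2 P)
    (δ : ℝ) (hδ : δ ∈ Set.Ioo (0 : ℝ) 1)
    (Vl : Λ → ℕ) (hVpos : ∀ l, 0 < Vl l)
    (hVlow : ∀ l, Real.log (4 / (π l * δ)) ≤ (Vl l : ℝ))
    (hVup : ∀ l, (Vl l : ℝ) ≤ (n : ℝ) / 2)
    (B : (l : Λ) → Fin (Vl l) → Finset (Fin n))
    (hdisj : ∀ l, Pairwise (fun K K' => Disjoint (B l K) (B l K')))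
    (hcover : ∀ l, Finset.univ.biUnion (B l) = Finset.univ)
    (hreg : ∀ l K, |((B l K).card : ℝ) - (n : ℝ) / (Vl l)| ≤ 1)
    (hCD : ∀ l, ∫ x, (ψ l x) ^ 2 ∂P ≠ 0 →
      (2 * Real.sqrt (6 * Real.exp 1)) *
          (Real.sqrt (variance (fun x => (ψ l x) ^ 2) P) / ∫ x, (ψ l x) ^ 2 ∂P) *
          Real.sqrt ((Vl l : ℝ) / n) ≤ 1 / 2)
    (medψ medψ2 : Λ → Ω → ℝ)
    (hmedψ : ∀ l ω,
      (Vl l : ℝ) ≤ 2 * (Finset.univ.filter (fun K =>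
          ((B l K).card : ℝ)⁻¹ * ∑ i ∈ B l K, ψ l (X i ω) ≤ medψ l ω)).card ∧
      (Vl l : ℝ) ≤ 2 * (Finset.univ.filter (fun K =>
          medψ l ω ≤ ((B l K).card : ℝ)⁻¹ * ∑ i ∈ B l K, ψ l (X i ω))).card)
    (hmedψ2 : ∀ l ω,
      (Vl l : ℝ) ≤ 2 * (Finset.univ.filter (fun K =>
          ((B l K).card : ℝ)⁻¹ * ∑ i ∈ B l K, (ψ l (X i ω)) ^ 2 ≤ medψ2 l ω)).card ∧
      (Vl l : ℝ) ≤ 2 * (Finset.univ.filter (fun K =>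
          medψ2 l ω ≤ ((B l K).card : ℝ)⁻¹ * ∑ i ∈ B l K, (ψ l (X i ω)) ^ 2)).card) :
    1 - ENNReal.ofReal δ ≤
      μ {ω | ∀ l, |medψ l ω - ∫ x, ψ l x ∂P| ≤
        (Real.sqrt 2 * (2 * Real.sqrt (6 * Real.exp 1))) *
          Real.sqrt (medψ2 l ω) * Real.sqrt ((Vl l : ℝ) / n)} :=
  simultaneous_median_of_means_deviation_general μ n hn X hXmeas hindep P hid π hπpos hπsum ψ hψ hψ4
    δ hδ Vl hVlow hVup B hdisj hreg hCD medψ medψ2 hmedψ hmedψ2
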